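/- Let G be a finite group. Then G contains a characteristic abelian subgroup of index at most μ(G). -/

import Mathlib

open Pointwise

/-- The Chermak–Delgado index-measure of a subgroup `H` of `G`:
`m(G,H) = |G:H| * |G:C_G(H)|`. -/
noncomputable def cdMeasure {G : Type*} [Group G] (H : Subgroup G) : ℕ :=
  H.index * (Subgroup.centralizer (H : Set G)).index

/-- `μ(G)`, the minimum of `m(G,H)` over all subgroups `H ≤ G`. -/
noncomputable def cdMu (G : Type*) [Group G] : ℕ :=
  sInf {n : ℕ | ∃ H : Subgroup G, cdMeasure H = n}

/-- A subgroup `H ≤ G` is a CD-subgroup if `m(G,H) = μ(G)`. -/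
def IsCDSubgroup {G : Type*} [Group G] (H : Subgroup G) : Prop :=
  cdMeasure H = cdMu G

/-!
The subgroups `H` with `m(G,H) = μ(G)` are closed under intersections, centralizers and
automorphisms. Closure under `⊓` comes from the submodularity
`|G:H⊓K| |G:H⊔K| ≤ |G:H| |G:K|`, applied to `H, K` and to `C(H), C(K)`, using
`C(H⊔K) = C(H) ⊓ C(K)` and `C(H) ⊔ C(K) ≤ C(H⊓K)`; closure under `C` comes from `H ≤ C(C(H))`.
Hence there is a least such subgroup `A`: it is characteristic, and `A ≤ C(A)` makes it
abelian. Its index is at most `|G:A| |G:C(A)| = μ(G)`.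
-/

namespace Subgroup

variable {G G' : Type*} [Group G] [Group G']

theorem index_inf_mul_index_sup_le (H K : Subgroup G) :
    (H ⊓ K).index * (H ⊔ K).index ≤ H.index * K.index := by
  by_cases hK : K.index = 0
  · have hdvd := index_dvd_of_le (inf_le_right : H ⊓ K ≤ K)
    rw [hK, zero_dvd_iff] at hdvd
    simp only [hK, hdvd, zero_mul, mul_zero, le_refl]
  have hKsup : K.relIndex (H ⊔ K) ≠ 0 := by
    rw [← relIndex_mul_index (le_sup_right : K ≤ H ⊔ K)] at hK
    exact left_ne_zero_of_mul hK
  calc (H ⊓ K).index * (H ⊔ K).index = H.index * K.relIndex H * (H ⊔ K).index := by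
        rw [← relIndex_mul_index (inf_le_left : H ⊓ K ≤ H), inf_relIndex_left, mul_comm H.index]
    _ ≤ H.index * K.relIndex (H ⊔ K) * (H ⊔ K).index := by
        gcongr; exact relIndex_le_of_le_right le_sup_left hKsup
    _ = H.index * K.index := by rw [mul_assoc, relIndex_mul_index le_sup_right]

theorem le_centralizer_centralizer (H : Subgroup G) :
    H ≤ centralizer (centralizer (H : Set G) : Set G) :=
  le_centralizer_iff.mpr le_rfl

theorem centralizer_sup (H K : Subgroup G) :
    centralizer ((H ⊔ K : Subgroup G) : Set G) =
      centralizer (H : Set G) ⊓ centralizer (K : Set G) := by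
  refine le_antisymm (le_inf (centralizer_le ?_) (centralizer_le ?_)) ?_
  · exact SetLike.coe_subset_coe.mpr le_sup_left
  · exact SetLike.coe_subset_coe.mpr le_sup_right
  · exact le_centralizer_iff.mp
      (sup_le (le_centralizer_iff.mp inf_le_left) (le_centralizer_iff.mp inf_le_right))

theorem sup_centralizer_le_centralizer_inf (H K : Subgroup G) :
    centralizer (H : Set G) ⊔ centralizer (K : Set G) ≤
      centralizer ((H ⊓ K : Subgroup G) : Set G) :=
  sup_le (centralizer_le (SetLike.coe_subset_coe.mpr inf_le_left))
    (centralizer_le (SetLike.coe_subset_coe.mpr inf_le_right))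

theorem centralizer_comap_mulEquiv (e : G ≃* G') (H : Subgroup G') :
    centralizer (H.comap e.toMonoidHom : Set G) =
      (centralizer (H : Set G')).comap e.toMonoidHom := by
  ext x
  simp only [coe_comap, Set.mem_preimage, mem_comap, mem_centralizer_iff, SetLike.mem_coe,
    MulEquiv.coe_toMonoidHom]
  rw [e.surjective.forall]
  simp only [← map_mul, e.injective.eq_iff]

end Subgroup

open Subgroup

section Measure

variable {G : Type*} [Group G]

theorem cdMeasure_comap_mulEquiv {G' : Type*} [Group G'] (e : G ≃* G') (H : Subgroup G') :
    cdMeasure (H.comap e.toMonoidHom) = cdMeasure H := by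
  rw [cdMeasure, cdMeasure, centralizer_comap_mulEquiv, index_comap_of_surjective _ e.surjective,
    index_comap_of_surjective _ e.surjective]

theorem cdMu_le_cdMeasure (H : Subgroup G) : cdMu G ≤ cdMeasure H :=
  Nat.sInf_le ⟨H, rfl⟩

theorem exists_isCDSubgroup : ∃ H : Subgroup G, IsCDSubgroup H :=
  Nat.sInf_mem (s := {n : ℕ | ∃ H : Subgroup G, cdMeasure H = n}) ⟨_, ⊤, rfl⟩

variable [Finite G]

theorem index_le_cdMeasure (H : Subgroup G) : H.index ≤ cdMeasure H :=
  Nat.le_mul_of_pos_right _ (Nat.pos_of_ne_zero index_ne_zero_of_finite)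

theorem cdMu_pos : 0 < cdMu G := by
  obtain ⟨H, hH⟩ := exists_isCDSubgroup (G := G)
  rw [← hH]
  exact Nat.mul_pos (Nat.pos_of_ne_zero index_ne_zero_of_finite)
    (Nat.pos_of_ne_zero index_ne_zero_of_finite)

theorem cdMeasure_inf_mul_cdMeasure_sup_le (H K : Subgroup G) :
    cdMeasure (H ⊓ K) * cdMeasure (H ⊔ K) ≤ cdMeasure H * cdMeasure K := by
  set CH := centralizer (H : Set G)
  set CK := centralizer (K : Set G)
  calc cdMeasure (H ⊓ K) * cdMeasure (H ⊔ K)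
      = ((H ⊓ K).index * (H ⊔ K).index) *
        ((centralizer ((H ⊓ K : Subgroup G) : Set G)).index *
          (centralizer ((H ⊔ K : Subgroup G) : Set G)).index) := by
        simp only [cdMeasure]; ring
    _ ≤ (H.index * K.index) * ((CH ⊓ CK).index * (CH ⊔ CK).index) := by
        rw [centralizer_sup, mul_comm (CH ⊓ CK).index]
        exact Nat.mul_le_mul (index_inf_mul_index_sup_le H K)
          (Nat.mul_le_mul_right _ (index_antitone (sup_centralizer_le_centralizer_inf H K)))
    _ ≤ (H.index * K.index) * (CH.index * CK.index) :=
        Nat.mul_le_mul_left _ (index_inf_mul_index_sup_le CH CK)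
    _ = cdMeasure H * cdMeasure K := by simp only [cdMeasure, CH, CK]; ring

theorem cdMeasure_centralizer_le (H : Subgroup G) :
    cdMeasure (centralizer (H : Set G)) ≤ cdMeasure H := by
  rw [cdMeasure, cdMeasure, mul_comm H.index]
  exact Nat.mul_le_mul_left _ (index_antitone (le_centralizer_centralizer H))

end Measure

namespace IsCDSubgroup

variable {G : Type*} [Group G] {H K : Subgroup G}

theorem comap (φ : G ≃* G) (hH : IsCDSubgroup H) : IsCDSubgroup (H.comap φ.toMonoidHom) :=
  (cdMeasure_comap_mulEquiv φ H).trans hH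

variable [Finite G]

theorem centralizer (hH : IsCDSubgroup H) : IsCDSubgroup (centralizer (H : Set G)) :=
  le_antisymm ((cdMeasure_centralizer_le H).trans hH.le) (cdMu_le_cdMeasure _)

theorem inf (hH : IsCDSubgroup H) (hK : IsCDSubgroup K) : IsCDSubgroup (H ⊓ K) := by
  refine le_antisymm (Nat.le_of_mul_le_mul_right ?_ (cdMu_pos (G := G))) (cdMu_le_cdMeasure _)
  calc cdMeasure (H ⊓ K) * cdMu G ≤ cdMeasure (H ⊓ K) * cdMeasure (H ⊔ K) := by
        gcongr; exact cdMu_le_cdMeasure _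
    _ ≤ cdMeasure H * cdMeasure K := cdMeasure_inf_mul_cdMeasure_sup_le H K
    _ = cdMu G * cdMu G := by rw [hH, hK]

end IsCDSubgroup

theorem stmt_7 {G : Type*} [Group G] [Finite G] :
    ∃ A : Subgroup G, A.Characteristic ∧ IsMulCommutative A ∧ A.index ≤ cdMu G := by
  set S : Set (Subgroup G) := {H | IsCDSubgroup H}
  have hA : IsCDSubgroup (sInf S) :=
    InfClosed.sInf_mem_of_nonempty (s := S) (fun _ hH _ hK ↦ IsCDSubgroup.inf hH hK) S.toFinite
      exists_isCDSubgroup subset_rfl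
  refine ⟨sInf S, ?_, ?_, (index_le_cdMeasure _).trans hA.le⟩
  · exact characteristic_iff_le_comap.mpr fun φ ↦ sInf_le (hA.comap φ)
  · exact le_centralizer_iff_isMulCommutative.mp (sInf_le hA.centralizer)
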